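/- arXiv:1402.1881 — 3 statements merged into one kernel-verified Lean document; each statement's English description precedes it below -/
import Mathlib

section
/- Let x be a feasible solution such that every job j ∈ 𝒥_f(x) has both the same immediate predecessor and the same immediate successor (possibly dummy) in every fractional schedule of x containing j. Then any two distinct fractional schedules of x are disjoint; equivalently, every job belongs to at most one fractional schedule of x. -/
open scoped Classical BigOperators

/-- A finset of jobs is pairwise compatible. -/
def Compatible {n : ℕ} (r d : Fin n → ℝ) (L : ℝ) (s : Finset (Fin n)) : Prop :=
  ∀ j ∈ s, ∀ k ∈ s, j < k → d j ≤ r k ∧ d k - r j ≤ L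

/-- A schedule for machine class `i`. -/
def IsSchedule {n c : ℕ} (r d : Fin n → ℝ) (L : ℝ) (𝒥 : Fin c → Set (Fin n))
    (i : Fin c) (s : Finset (Fin n)) : Prop :=
  s.Nonempty ∧ Compatible r d L s ∧ ∀ j ∈ s, j ∈ 𝒥 i

/-- A feasible (fractional covering) solution. -/
def Feasible {n c : ℕ} (r d : Fin n → ℝ) (L : ℝ) (𝒥 : Fin c → Set (Fin n))
    (x : Fin c × Finset (Fin n) → ℝ) : Prop :=
  (∀ p, 0 ≤ x p) ∧
  (∀ p, 0 < x p → IsSchedule r d L 𝒥 p.1 p.2) ∧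
  (∀ j : Fin n, 1 ≤ ∑ p : Fin c × Finset (Fin n), if j ∈ p.2 then x p else 0)

/-- The cost of a solution. -/
def cost {n c : ℕ} (w : Fin c → ℝ) (x : Fin c × Finset (Fin n) → ℝ) : ℝ :=
  ∑ p : Fin c × Finset (Fin n), w p.1 * x p

/-- Optimality. -/
def Optimal {n c : ℕ} (r d : Fin n → ℝ) (L : ℝ) (𝒥 : Fin c → Set (Fin n)) (w : Fin c → ℝ)
    (x : Fin c × Finset (Fin n) → ℝ) : Prop :=
  Feasible r d L 𝒥 x ∧ ∀ y, Feasible r d L 𝒥 y → cost w x ≤ cost w y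

/-- A column is fractional. -/
def FracCol {n c : ℕ} (x : Fin c × Finset (Fin n) → ℝ) (p : Fin c × Finset (Fin n)) : Prop :=
  0 < x p ∧ x p < 1

/-- A fractional schedule of `x`. -/
def FracSched {n c : ℕ} (x : Fin c × Finset (Fin n) → ℝ) (s : Finset (Fin n)) : Prop :=
  ∃ i, FracCol x (i, s)

/-- The set of jobs belonging to some fractional schedule. -/
def Jf {n c : ℕ} (x : Fin c × Finset (Fin n) → ℝ) : Set (Fin n) :=
  {j | ∃ s, FracSched x s ∧ j ∈ s}

/-- Immediate successor of `j` in `s` (`⊤` = dummy successor). -/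
def succIn {n : ℕ} (s : Finset (Fin n)) (j : Fin n) : WithTop (Fin n) :=
  (s.filter (fun k => j < k)).min

/-- Immediate predecessor of `j` in `s` (`⊥` = dummy predecessor). -/
def predIn {n : ℕ} (s : Finset (Fin n)) (j : Fin n) : WithBot (Fin n) :=
  (s.filter (fun k => k < j)).max

/-- Condition (⋆). -/
def StarCond {n c : ℕ} (x : Fin c × Finset (Fin n) → ℝ) : Prop :=
  ∀ j ∈ Jf x, 1 ≤ ∑ p : Fin c × Finset (Fin n),
    if FracCol x p ∧ j ∈ p.2 then x p else 0

/-- Integral solution. -/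
def Integral {n c : ℕ} (x : Fin c × Finset (Fin n) → ℝ) : Prop :=
  ∀ p, x p = 0 ∨ x p = 1


/-!
Let two fractional schedules `s`, `s'` share a job `j`. Going up from `j` along `s`, the
predecessor in `s` of the next job `k` is a common job (by induction), and the successor of that
job is `k` in `s`, hence also in `s'`; so every job of `s` above `j` lies in `s'`. Going down with
predecessors is symmetric, so `s ⊆ s'`, and by symmetry `s = s'`.
-/

section Neighbours

variable {n : ℕ} {s t : Finset (Fin n)} {j k p : Fin n}

lemma mem_of_predIn_eq_coe (h : predIn s k = p) : p ∈ s :=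
  (Finset.mem_filter.mp (Finset.mem_of_max h)).1

lemma mem_of_succIn_eq_coe (h : succIn s k = p) : p ∈ s :=
  (Finset.mem_filter.mp (Finset.mem_of_min h)).1

lemma succIn_eq_of_predIn_eq (hk : k ∈ s) (h : predIn s k = p) : succIn s p = k := by
  obtain ⟨hp, hpk⟩ := Finset.mem_filter.mp (Finset.mem_of_max h)
  refine le_antisymm (Finset.min_le (Finset.mem_filter.mpr ⟨hk, hpk⟩)) (Finset.le_min ?_)
  intro b hb
  obtain ⟨hbs, hpb⟩ := Finset.mem_filter.mp hb
  by_contra! hbk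
  have hb : b ∈ s.filter (· < k) := Finset.mem_filter.mpr ⟨hbs, WithTop.coe_lt_coe.mp hbk⟩
  exact (Finset.le_max_of_eq hb h).not_gt hpb

lemma predIn_eq_of_succIn_eq (hk : k ∈ s) (h : succIn s k = p) : predIn s p = k := by
  obtain ⟨hp, hkp⟩ := Finset.mem_filter.mp (Finset.mem_of_min h)
  refine le_antisymm (Finset.max_le ?_) (Finset.le_max (Finset.mem_filter.mpr ⟨hk, hkp⟩))
  intro b hb
  obtain ⟨hbs, hbp⟩ := Finset.mem_filter.mp hb
  by_contra! hkb
  have hb : b ∈ s.filter (k < ·) := Finset.mem_filter.mpr ⟨hbs, WithBot.coe_lt_coe.mp hkb⟩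
  exact (Finset.min_le_of_eq hb h).not_gt hbp

lemma exists_predIn_eq_of_lt (hj : j ∈ s) (hjk : j < k) :
    ∃ p, j ≤ p ∧ p < k ∧ predIn s k = p := by
  have hj' : j ∈ s.filter (· < k) := Finset.mem_filter.mpr ⟨hj, hjk⟩
  obtain ⟨p, hp⟩ := Finset.max_of_mem hj'
  exact ⟨p, Finset.le_max_of_eq hj' hp,
    (Finset.mem_filter.mp (Finset.mem_of_max hp)).2, hp⟩

lemma exists_succIn_eq_of_lt (hj : j ∈ s) (hkj : k < j) :
    ∃ q, k < q ∧ q ≤ j ∧ succIn s k = q := by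
  have hj' : j ∈ s.filter (k < ·) := Finset.mem_filter.mpr ⟨hj, hkj⟩
  obtain ⟨q, hq⟩ := Finset.min_of_mem hj'
  exact ⟨q, (Finset.mem_filter.mp (Finset.mem_of_min hq)).2, Finset.min_le_of_eq hj' hq, hq⟩

lemma mem_of_le_of_succIn_eq (hjs : j ∈ s) (hjt : j ∈ t)
    (hsucc : ∀ m ∈ s, m ∈ t → succIn s m = succIn t m) :
    ∀ k ∈ s, j ≤ k → k ∈ t := by
  intro k
  induction k using WellFoundedLT.induction with
  | _ k ih =>
    intro hks hjk
    rcases hjk.eq_or_lt with rfl | hjk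
    · exact hjt
    obtain ⟨p, hjp, hpk, hp⟩ := exists_predIn_eq_of_lt hjs hjk
    have hps : p ∈ s := mem_of_predIn_eq_coe hp
    have hpt : p ∈ t := ih p hpk hps hjp
    exact mem_of_succIn_eq_coe ((hsucc p hps hpt).symm.trans (succIn_eq_of_predIn_eq hks hp))

lemma mem_of_ge_of_predIn_eq (hjs : j ∈ s) (hjt : j ∈ t)
    (hpred : ∀ m ∈ s, m ∈ t → predIn s m = predIn t m) :
    ∀ k ∈ s, k ≤ j → k ∈ t := by
  intro k
  induction k using WellFoundedGT.induction with
  | _ k ih =>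
    intro hks hkj
    rcases hkj.eq_or_lt with rfl | hkj
    · exact hjt
    obtain ⟨q, hkq, hqj, hq⟩ := exists_succIn_eq_of_lt hjs hkj
    have hqs : q ∈ s := mem_of_succIn_eq_coe hq
    have hqt : q ∈ t := ih q hkq hqs hqj
    exact mem_of_predIn_eq_coe ((hpred q hqs hqt).symm.trans (predIn_eq_of_succIn_eq hks hq))

lemma subset_of_mem_of_predIn_succIn_eq (hjs : j ∈ s) (hjt : j ∈ t)
    (h : ∀ m ∈ s, m ∈ t → predIn s m = predIn t m ∧ succIn s m = succIn t m) : s ⊆ t :=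
  fun k hks => (le_total j k).elim
    (mem_of_le_of_succIn_eq hjs hjt (fun m hms hmt => (h m hms hmt).2) k hks)
    (mem_of_ge_of_predIn_eq hjs hjt (fun m hms hmt => (h m hms hmt).1) k hks)

end Neighbours

theorem same_pred_succ_implies_disjoint_general {n c : ℕ}
    (x : Fin c × Finset (Fin n) → ℝ)
    (hps : ∀ j ∈ Jf x, ∀ s s' : Finset (Fin n),
      FracSched x s → FracSched x s' → j ∈ s → j ∈ s' →
        predIn s j = predIn s' j ∧ succIn s j = succIn s' j) :
    ∀ s s' : Finset (Fin n), FracSched x s → FracSched x s' → s ≠ s' →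
      Disjoint s s' := by
  intro s s' hs hs' hne
  refine Finset.disjoint_left.mpr fun j hjs hjs' => hne ?_
  have hsame : ∀ {t t'}, FracSched x t → FracSched x t' → ∀ m ∈ t, m ∈ t' →
      predIn t m = predIn t' m ∧ succIn t m = succIn t' m :=
    fun ht ht' m hm hm' => hps m ⟨_, ht, hm⟩ _ _ ht ht' hm hm'
  exact (subset_of_mem_of_predIn_succIn_eq hjs hjs' (hsame hs hs')).antisymm
    (subset_of_mem_of_predIn_succIn_eq hjs' hjs (hsame hs' hs))

theorem same_pred_succ_implies_disjoint {n c : ℕ} (r d : Fin n → ℝ) (L : ℝ) (𝒥 : Fin c → Set (Fin n)) (w : Fin c → ℝ)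
    (hrd : ∀ j, r j ≤ d j) (hmono : ∀ j k : Fin n, j ≤ k → r j ≤ r k)
    (hL : 0 < L) (hw : ∀ i, 0 < w i)
    (x : Fin c × Finset (Fin n) → ℝ)
    (hfeas : Feasible r d L 𝒥 x)
    (hps : ∀ j ∈ Jf x, ∀ s s' : Finset (Fin n),
      FracSched x s → FracSched x s' → j ∈ s → j ∈ s' →
        predIn s j = predIn s' j ∧ succIn s j = succIn s' j) :
    ∀ s s' : Finset (Fin n), FracSched x s → FracSched x s' → s ≠ s' →
      Disjoint s s' :=
  same_pred_succ_implies_disjoint_general x hps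
end

section
/- Let x be a feasible solution satisfying condition (⋆), and let k < ℓ be jobs in 𝒥_f(x) such that every fractional schedule of x containing k also contains ℓ. Then the solution x' obtained from x by moving, for each fractional column (i, s) with ℓ ∈ s and k ∉ s, the value x (i, s) onto the column (i, s \ {ℓ}) (dropping it when s = {ℓ}) is feasible and satisfies cost(x') ≤ cost(x); in particular, if x is optimal then x' is optimal. -/
open scoped Classical BigOperators

/-- The solution obtained from `x` by moving, for each fractional column `(i, s)` with
`ℓ ∈ s` and `k ∉ s`, the value `x (i, s)` onto the column `(i, s \\ {ℓ})`,
dropping it when `s = {ℓ}`. -/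
noncomputable def moveOffPair {n c : ℕ} (x : Fin c × Finset (Fin n) → ℝ) (k ℓ : Fin n) :
    Fin c × Finset (Fin n) → ℝ := fun p =>
  (if ℓ ∈ p.2 ∧ k ∉ p.2 ∧ FracCol x p then 0 else x p) +
  (if ℓ ∉ p.2 ∧ k ∉ p.2 ∧ p.2.Nonempty ∧ FracCol x (p.1, insert ℓ p.2) then
      x (p.1, insert ℓ p.2) else 0)


/-!
Write `x' = x - m + m'`, where `m` is the mass taken off the fractional columns `(i, s)` with
`ℓ ∈ s`, `k ∉ s`, and `m'` puts it back on `(i, s \ {ℓ})`. Against any column weights `φ` this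
changes `∑ φ x` by `-∑ m (φ (i, s) - φ (i, s \ {ℓ}))` (with `φ` of an empty column read as `0`).
For the cost (`φ = w i ≥ 0`) every term is nonnegative; for the covering constraint of a job
`j ≠ ℓ` (`φ = [j ∈ s]`) every term vanishes. Job `ℓ` stays covered because every fractional
column containing `k` contains `ℓ` and keeps its mass, so (⋆) at `k` bounds its coverage.
Subsets of schedules are schedules, so `x'` is supported on schedules.
-/

section MoveAlongErase

variable {ι α : Type*} [DecidableEq α]

theorem Finset.sum_ite_notMem_insert [Fintype α] {M : Type*} [AddCommMonoid M] (a : α)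
    (f : Finset α → M) :
    ∑ s, (if a ∉ s then f (insert a s) else 0) = ∑ s, if a ∈ s then f s else 0 := by
  rw [← Finset.sum_filter, ← Finset.sum_filter]
  refine Finset.sum_nbij' (insert a) (fun s => s.erase a) ?_ ?_ ?_ ?_ fun _ _ => rfl
  · simp
  · simp
  · intro s hs
    simp_all
  · intro s hs
    simp_all

/-- Moves, for every column `p`, the mass `m p` from `p` to the column `(p.1, p.2.erase a)`,
dropping it when that set is empty. -/
def moveAlongErase (x m : ι × Finset α → ℝ) (a : α) : ι × Finset α → ℝ := fun p =>
  x p - m p + if a ∉ p.2 ∧ p.2.Nonempty then m (p.1, insert a p.2) else 0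

variable {x m : ι × Finset α → ℝ} {a : α}

theorem sum_mul_moveAlongErase [Fintype ι] [Fintype α] (φ : ι × Finset α → ℝ)
    (hm : ∀ p, a ∉ p.2 → m p = 0) :
    ∑ p, φ p * moveAlongErase x m a p = ∑ p, φ p * x p -
      ∑ p, m p * (φ p - if (p.2.erase a).Nonempty then φ (p.1, p.2.erase a) else 0) := by
  set ψ : ι × Finset α → ℝ := fun p =>
    if (p.2.erase a).Nonempty then φ (p.1, p.2.erase a) else 0 with hψ
  have hshift : ∑ p, φ p * (if a ∉ p.2 ∧ p.2.Nonempty then m (p.1, insert a p.2) else 0) =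
      ∑ p, m p * ψ p :=
    calc _ = ∑ p : ι × Finset α, if a ∉ p.2 then m (p.1, insert a p.2) * ψ (p.1, insert a p.2)
          else 0 := by
          refine Finset.sum_congr rfl fun p _ => ?_
          by_cases ha : a ∈ p.2
          · simp [ha]
          · by_cases hne : p.2.Nonempty <;> simp [ha, hne, hψ, Finset.erase_insert ha, mul_comm]
      _ = ∑ p : ι × Finset α, if a ∈ p.2 then m p * ψ p else 0 := by
          simp only [Fintype.sum_prod_type]
          exact Finset.sum_congr rfl fun i _ =>
            Finset.sum_ite_notMem_insert a fun s => m (i, s) * ψ (i, s)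
      _ = ∑ p, m p * ψ p :=
          Finset.sum_congr rfl fun p _ => by
            by_cases ha : a ∈ p.2 <;> simp [ha, hm]
  simp only [moveAlongErase, mul_add, mul_sub, Finset.sum_add_distrib, Finset.sum_sub_distrib,
    hshift, mul_comm (φ _) (m _)]
  ring

theorem sub_le_moveAlongErase (hm : ∀ p, 0 ≤ m p) (p : ι × Finset α) :
    x p - m p ≤ moveAlongErase x m a p :=
  le_add_of_nonneg_right <| by
    split_ifs
    exacts [hm _, le_rfl]

theorem moveAlongErase_nonneg (hm : ∀ p, 0 ≤ m p) (hmx : ∀ p, m p ≤ x p) (p : ι × Finset α) :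
    0 ≤ moveAlongErase x m a p :=
  (sub_nonneg.2 (hmx p)).trans (sub_le_moveAlongErase hm p)

theorem le_moveAlongErase (hm : ∀ p, 0 ≤ m p) {p : ι × Finset α} (hp : m p = 0) :
    x p ≤ moveAlongErase x m a p := by
  simpa [hp] using sub_le_moveAlongErase (a := a) (x := x) hm p

theorem pos_of_moveAlongErase_pos (hm : ∀ p, 0 ≤ m p) (hmx : ∀ p, m p ≤ x p) {p : ι × Finset α}
    (hp : 0 < moveAlongErase x m a p) :
    0 < x p ∨ a ∉ p.2 ∧ p.2.Nonempty ∧ 0 < x (p.1, insert a p.2) := by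
  by_cases hx : 0 < x p
  · exact Or.inl hx
  right
  simp only [moveAlongErase] at hp
  split_ifs at hp with h
  · exact ⟨h.1, h.2, by linarith [hm p, hmx (p.1, insert a p.2)]⟩
  · linarith [hm p]

end MoveAlongErase

section Scheduling

variable {n c : ℕ} {r d : Fin n → ℝ} {L : ℝ} {𝒥 : Fin c → Set (Fin n)}
  {x m : Fin c × Finset (Fin n) → ℝ} {k ℓ : Fin n}

theorem IsSchedule.of_subset {i : Fin c} {s t : Finset (Fin n)} (hst : s ⊆ t)
    (hs : s.Nonempty) (ht : IsSchedule r d L 𝒥 i t) : IsSchedule r d L 𝒥 i s :=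
  ⟨hs, fun j hj k hk hjk => ht.2.1 j (hst hj) k (hst hk) hjk, fun j hj => ht.2.2 j (hst hj)⟩

theorem Feasible.moveAlongErase (hx : Feasible r d L 𝒥 x) (hm : ∀ p, 0 ≤ m p)
    (hmx : ∀ p, m p ≤ x p) (hmℓ : ∀ p, ℓ ∉ p.2 → m p = 0)
    (hℓ : 1 ≤ ∑ p, if ℓ ∈ p.2 then moveAlongErase x m ℓ p else 0) :
    Feasible r d L 𝒥 (moveAlongErase x m ℓ) := by
  obtain ⟨-, hxs, hxc⟩ := hx
  refine ⟨moveAlongErase_nonneg hm hmx, fun p hp => ?_, fun j => ?_⟩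
  · rcases pos_of_moveAlongErase_pos hm hmx hp with hxp | ⟨-, hne, hins⟩
    · exact hxs p hxp
    · exact (hxs _ hins).of_subset (Finset.subset_insert _ _) hne
  rcases eq_or_ne j ℓ with rfl | hjℓ
  · exact hℓ
  have hsum := sum_mul_moveAlongErase (x := x) (fun p => if j ∈ p.2 then 1 else 0) hmℓ
  have hloss : ∑ p, m p * ((if j ∈ p.2 then 1 else 0) -
      if (p.2.erase ℓ).Nonempty then (if j ∈ p.2.erase ℓ then 1 else 0) else 0) = 0 := by
    refine Finset.sum_eq_zero fun p _ => ?_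
    by_cases hℓp : ℓ ∈ p.2
    · by_cases hjp : j ∈ p.2
      · have hne : (p.2.erase ℓ).Nonempty := ⟨j, Finset.mem_erase.2 ⟨hjℓ, hjp⟩⟩
        simp [hjp, hjℓ, hne]
      · simp [hjp]
    · simp [hmℓ p hℓp]
  simp only [boole_mul, hloss, sub_zero] at hsum
  exact hsum ▸ hxc j

theorem cost_moveAlongErase_le {w : Fin c → ℝ} (hw : ∀ i, 0 ≤ w i) (hm : ∀ p, 0 ≤ m p)
    (hmℓ : ∀ p, ℓ ∉ p.2 → m p = 0) : cost w (moveAlongErase x m ℓ) ≤ cost w x := by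
  rw [cost, cost, sum_mul_moveAlongErase _ hmℓ]
  refine sub_le_self _ (Finset.sum_nonneg fun p _ => mul_nonneg (hm p) ?_)
  split_ifs <;> simp [hw]

theorem Optimal.of_cost_le {w : Fin c → ℝ} {y : Fin c × Finset (Fin n) → ℝ}
    (hx : Optimal r d L 𝒥 w x) (hy : Feasible r d L 𝒥 y) (hyx : cost w y ≤ cost w x) :
    Optimal r d L 𝒥 w y :=
  ⟨hy, fun z hz => hyx.trans (hx.2 z hz)⟩

noncomputable def movedMass (x : Fin c × Finset (Fin n) → ℝ) (k ℓ : Fin n) :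
    Fin c × Finset (Fin n) → ℝ := fun p =>
  if ℓ ∈ p.2 ∧ k ∉ p.2 ∧ FracCol x p then x p else 0

theorem moveOffPair_eq_moveAlongErase (hkℓ : k ≠ ℓ) :
    moveOffPair x k ℓ = moveAlongErase x (movedMass x k ℓ) ℓ := by
  funext p
  by_cases hℓ : ℓ ∈ p.2 <;> by_cases hk : k ∈ p.2 <;>
    simp [moveOffPair, moveAlongErase, movedMass, hℓ, hk, hkℓ] <;> split_ifs <;> simp_all

theorem movedMass_nonneg (hx : ∀ p, 0 ≤ x p) (p : Fin c × Finset (Fin n)) :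
    0 ≤ movedMass x k ℓ p := by
  unfold movedMass
  split_ifs
  exacts [hx p, le_rfl]

theorem movedMass_le (hx : ∀ p, 0 ≤ x p) (p : Fin c × Finset (Fin n)) :
    movedMass x k ℓ p ≤ x p := by
  unfold movedMass
  split_ifs
  exacts [le_rfl, hx p]

theorem movedMass_of_notMem {p : Fin c × Finset (Fin n)} (hℓ : ℓ ∉ p.2) :
    movedMass x k ℓ p = 0 :=
  if_neg fun h => hℓ h.1

theorem sum_fracCol_le_sum_moveAlongErase_movedMass (hx : ∀ p, 0 ≤ x p)
    (hcover : ∀ s, FracSched x s → k ∈ s → ℓ ∈ s) :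
    (∑ p, if FracCol x p ∧ k ∈ p.2 then x p else 0) ≤
      ∑ p, if ℓ ∈ p.2 then moveAlongErase x (movedMass x k ℓ) ℓ p else 0 := by
  refine Finset.sum_le_sum fun p _ => ?_
  split_ifs with hfrac hℓ hℓ
  · exact le_moveAlongErase (movedMass_nonneg hx) (if_neg fun h => h.2.1 hfrac.2)
  · exact absurd (hcover p.2 ⟨p.1, hfrac.1⟩ hfrac.2) hℓ
  · exact moveAlongErase_nonneg (movedMass_nonneg hx) (movedMass_le hx) p
  · exact le_rfl

end Scheduling

theorem remove_trailing_job_keeps_feasibility_general {n c : ℕ} (r d : Fin n → ℝ) (L : ℝ) (𝒥 : Fin c → Set (Fin n)) (w : Fin c → ℝ)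
    (hw : ∀ i, 0 < w i)
    (x : Fin c × Finset (Fin n) → ℝ)
    (hfeas : Feasible r d L 𝒥 x) (hstar : StarCond x)
    (k ℓ : Fin n) (hkl : k < ℓ) (hk : k ∈ Jf x)
    (hcover : ∀ s : Finset (Fin n), FracSched x s → k ∈ s → ℓ ∈ s) :
    Feasible r d L 𝒥 (moveOffPair x k ℓ) ∧
    cost w (moveOffPair x k ℓ) ≤ cost w x ∧
    (Optimal r d L 𝒥 w x → Optimal r d L 𝒥 w (moveOffPair x k ℓ)) := by
  rw [moveOffPair_eq_moveAlongErase hkl.ne]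
  have hm : ∀ p, 0 ≤ movedMass x k ℓ p := movedMass_nonneg hfeas.1
  have hmℓ : ∀ p, ℓ ∉ p.2 → movedMass x k ℓ p = 0 := fun _ => movedMass_of_notMem
  have hfeas' := hfeas.moveAlongErase hm (movedMass_le hfeas.1) hmℓ
    ((hstar k hk).trans (sum_fracCol_le_sum_moveAlongErase_movedMass hfeas.1 hcover))
  have hcost := cost_moveAlongErase_le (x := x) (fun i => (hw i).le) hm hmℓ
  exact ⟨hfeas', hcost, fun hopt => hopt.of_cost_le hfeas' hcost⟩

theorem remove_trailing_job_keeps_feasibility {n c : ℕ} (r d : Fin n → ℝ) (L : ℝ) (𝒥 : Fin c → Set (Fin n)) (w : Fin c → ℝ)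
    (hrd : ∀ j, r j ≤ d j) (hmono : ∀ j k : Fin n, j ≤ k → r j ≤ r k)
    (hL : 0 < L) (hw : ∀ i, 0 < w i)
    (x : Fin c × Finset (Fin n) → ℝ)
    (hfeas : Feasible r d L 𝒥 x) (hstar : StarCond x)
    (k ℓ : Fin n) (hkl : k < ℓ) (hk : k ∈ Jf x) (hl : ℓ ∈ Jf x)
    (hcover : ∀ s : Finset (Fin n), FracSched x s → k ∈ s → ℓ ∈ s) :
    Feasible r d L 𝒥 (moveOffPair x k ℓ) ∧
    cost w (moveOffPair x k ℓ) ≤ cost w x ∧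
    (Optimal r d L 𝒥 w x → Optimal r d L 𝒥 w (moveOffPair x k ℓ)) :=
  remove_trailing_job_keeps_feasibility_general r d L 𝒥 w hw x hfeas hstar k ℓ hkl hk hcover
end

section
/- Fix a set 𝒥 ⊆ Fin n of jobs and dual weights λ : Fin n → ℝ. For jobs j ≤ k, let F(j, k) be the (finite) collection of pairwise compatible finsets s ⊆ 𝒥 with minimum element j and maximum element k, and when F(j, k) is nonempty let f(j, k) be the maximum over s ∈ F(j, k) of Σ_{m ∈ s} λ m. Let j < k with j, k ∈ 𝒥 and d k − r j ≤ L, and suppose the set T = { ℓ : j ≤ ℓ < k, F(j, ℓ) ≠ ∅, and d ℓ ≤ r k } is nonempty. Then F(j, k) is nonempty and the dynamic-programming recursion holds: f(j, k) = λ k + max_{ℓ ∈ T} f(j, ℓ). -/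
open scoped Classical BigOperators

/-- The collection `F(j, k)` of pairwise compatible finsets of jobs from `𝒥` with
minimum element `j` and maximum element `k`. -/
noncomputable def Fcoll {n : ℕ} (r d : Fin n → ℝ) (L : ℝ) (𝒥 : Set (Fin n)) (j k : Fin n) :
    Finset (Finset (Fin n)) :=
  Finset.univ.filter (fun s => (∀ m ∈ s, m ∈ 𝒥) ∧ Compatible r d L s ∧
    s.min = (j : WithTop (Fin n)) ∧ s.max = (k : WithBot (Fin n)))

/-- `f(j, k)`: the maximum of `∑_{m ∈ s} λ m` over `s ∈ F(j, k)` (when `F(j, k)` is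
nonempty, this supremum is attained since `F(j, k)` is finite). -/
noncomputable def fval {n : ℕ} (r d : Fin n → ℝ) (L : ℝ) (𝒥 : Set (Fin n))
    (lam : Fin n → ℝ) (j k : Fin n) : ℝ :=
  sSup ((fun s : Finset (Fin n) => ∑ m ∈ s, lam m) ''
    (↑(Fcoll r d L 𝒥 j k) : Set (Finset (Fin n))))

/-!
A compatible set with minimum `j` and maximum `k > j` is, after removing `k`, a compatible set
with minimum `j` whose maximum `ℓ` satisfies `d ℓ ≤ r k`; conversely `k` can be appended to any
such set, the spread constraint `d k - r m ≤ L` following from `d k - r j ≤ L` because start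
times are monotone. Thus `insert k` and `erase k` are mutually inverse between `F(j, k)` and the
union of the `F(j, ℓ)` over `ℓ ∈ T`, and they change the weight by exactly `λ k`.
-/

open Finset

namespace Finset

variable {α : Type*} [LinearOrder α] {s : Finset α} {a : α}

lemma min_eq_coe_iff : s.min = a ↔ a ∈ s ∧ ∀ b ∈ s, a ≤ b :=
  ⟨fun h => ⟨mem_of_min h, fun _ hb => min_le_of_eq hb h⟩, fun ⟨ha, hle⟩ =>
    le_antisymm (min_le ha) (Finset.le_min fun b hb => WithTop.coe_le_coe.2 (hle b hb))⟩

lemma max_eq_coe_iff : s.max = a ↔ a ∈ s ∧ ∀ b ∈ s, b ≤ a :=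
  ⟨fun h => ⟨mem_of_max h, fun _ hb => le_max_of_eq hb h⟩, fun ⟨ha, hle⟩ =>
    le_antisymm (Finset.max_le fun b hb => WithBot.coe_le_coe.2 (hle b hb)) (le_max ha)⟩

end Finset

section Compatible

variable {n : ℕ} {r d : Fin n → ℝ} {L : ℝ} {s t : Finset (Fin n)}

lemma Compatible.mono (ht : Compatible r d L t) (hst : s ⊆ t) : Compatible r d L s :=
  fun a ha b hb => ht a (hst ha) b (hst hb)

lemma Compatible.insert_of_lt {k : Fin n} (hs : Compatible r d L s) (hlt : ∀ m ∈ s, m < k)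
    (hk : ∀ m ∈ s, d m ≤ r k ∧ d k - r m ≤ L) : Compatible r d L (insert k s) := by
  intro a ha b hb hab
  rcases mem_insert.1 ha with rfl | ha <;> rcases mem_insert.1 hb with hb | hb
  · exact absurd hb hab.ne'
  · exact absurd hab (hlt b hb).not_gt
  · exact hb ▸ hk a ha
  · exact hs a ha b hb hab

end Compatible

section Fcoll

variable {n : ℕ} {r d : Fin n → ℝ} {L : ℝ} {𝒥 : Set (Fin n)} {j k ℓ : Fin n}
  {s : Finset (Fin n)}

lemma mem_Fcoll : s ∈ Fcoll r d L 𝒥 j k ↔ (∀ m ∈ s, m ∈ 𝒥) ∧ Compatible r d L s ∧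
    (j ∈ s ∧ ∀ m ∈ s, j ≤ m) ∧ (k ∈ s ∧ ∀ m ∈ s, m ≤ k) := by
  simp only [Fcoll, mem_filter, mem_univ, true_and, min_eq_coe_iff, max_eq_coe_iff]

lemma notMem_of_mem_Fcoll_of_lt (hs : s ∈ Fcoll r d L 𝒥 j ℓ) (hℓk : ℓ < k) : k ∉ s :=
  fun hk => ((mem_Fcoll.1 hs).2.2.2.2 k hk).not_gt hℓk

lemma insert_mem_Fcoll (hrd : ∀ j, r j ≤ d j) (hmono : ∀ j k : Fin n, j ≤ k → r j ≤ r k)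
    (hk : k ∈ 𝒥) (hℓk : ℓ < k) (hdℓ : d ℓ ≤ r k) (hdL : d k - r j ≤ L)
    (hs : s ∈ Fcoll r d L 𝒥 j ℓ) : insert k s ∈ Fcoll r d L 𝒥 j k := by
  obtain ⟨h𝒥, hcomp, ⟨hjs, hjle⟩, ⟨hℓs, hleℓ⟩⟩ := mem_Fcoll.1 hs
  have hlt : ∀ m ∈ s, m < k := fun m hm => (hleℓ m hm).trans_lt hℓk
  have hdm : ∀ m ∈ s, d m ≤ r k := fun m hm => by
    rcases (hleℓ m hm).lt_or_eq with hmℓ | rfl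
    · exact ((hcomp m hm ℓ hℓs hmℓ).1.trans (hrd ℓ)).trans hdℓ
    · exact hdℓ
  refine mem_Fcoll.2 ⟨?_, hcomp.insert_of_lt hlt fun m hm => ⟨hdm m hm, ?_⟩, ⟨?_, ?_⟩, ?_, ?_⟩
  · simpa only [mem_insert, forall_eq_or_imp] using ⟨hk, h𝒥⟩
  · linarith [hmono j m (hjle m hm)]
  · exact mem_insert_of_mem hjs
  · simpa only [mem_insert, forall_eq_or_imp] using ⟨(hjle ℓ hℓs).trans hℓk.le, hjle⟩
  · exact mem_insert_self k s
  · simpa only [mem_insert, forall_eq_or_imp] using ⟨le_rfl, fun m hm => (hlt m hm).le⟩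

lemma exists_erase_mem_Fcoll (hjk : j < k) (hs : s ∈ Fcoll r d L 𝒥 j k) :
    ∃ ℓ, j ≤ ℓ ∧ ℓ < k ∧ d ℓ ≤ r k ∧ s.erase k ∈ Fcoll r d L 𝒥 j ℓ := by
  obtain ⟨h𝒥, hcomp, ⟨hjs, hjle⟩, ⟨hks, hlek⟩⟩ := mem_Fcoll.1 hs
  have hje : j ∈ s.erase k := mem_erase.2 ⟨hjk.ne, hjs⟩
  set ℓ := (s.erase k).max' ⟨j, hje⟩
  have hℓe : ℓ ∈ s.erase k := max'_mem _ _
  have hℓs : ℓ ∈ s := mem_of_mem_erase hℓe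
  have hℓk : ℓ < k := (hlek ℓ hℓs).lt_of_ne (ne_of_mem_erase hℓe)
  have hse : s.erase k ∈ Fcoll r d L 𝒥 j ℓ := by
    exact mem_Fcoll.2 ⟨fun m hm => h𝒥 m (mem_of_mem_erase hm), hcomp.mono (erase_subset k s),
      ⟨hje, fun m hm => hjle m (mem_of_mem_erase hm)⟩, ⟨hℓe, fun m hm => le_max' _ m hm⟩⟩
  exact ⟨ℓ, hjle ℓ hℓs, hℓk, (hcomp ℓ hℓs k hks hℓk).1, hse⟩

variable {lam : Fin n → ℝ}

lemma fval_eq_sup' (h : (Fcoll r d L 𝒥 j k).Nonempty) :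
    fval r d L 𝒥 lam j k = (Fcoll r d L 𝒥 j k).sup' h (fun s => ∑ m ∈ s, lam m) := by
  rw [sup'_eq_csSup_image]
  rfl

lemma sum_le_fval (hs : s ∈ Fcoll r d L 𝒥 j k) : ∑ m ∈ s, lam m ≤ fval r d L 𝒥 lam j k := by
  rw [fval_eq_sup' ⟨s, hs⟩]
  exact le_sup' (fun s => ∑ m ∈ s, lam m) hs

lemma fval_le {c : ℝ} (h : (Fcoll r d L 𝒥 j k).Nonempty)
    (hc : ∀ s ∈ Fcoll r d L 𝒥 j k, ∑ m ∈ s, lam m ≤ c) : fval r d L 𝒥 lam j k ≤ c := by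
  rw [fval_eq_sup' h]
  exact sup'_le _ _ hc

lemma add_fval_le_fval (hrd : ∀ j, r j ≤ d j) (hmono : ∀ j k : Fin n, j ≤ k → r j ≤ r k)
    (hk : k ∈ 𝒥) (hℓk : ℓ < k) (hdℓ : d ℓ ≤ r k) (hdL : d k - r j ≤ L)
    (h : (Fcoll r d L 𝒥 j ℓ).Nonempty) :
    lam k + fval r d L 𝒥 lam j ℓ ≤ fval r d L 𝒥 lam j k := by
  rw [fval_eq_sup' h, add_sup']
  refine sup'_le _ _ fun s hs => ?_
  rw [← sum_insert (notMem_of_mem_Fcoll_of_lt hs hℓk)]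
  exact sum_le_fval (insert_mem_Fcoll hrd hmono hk hℓk hdℓ hdL hs)

end Fcoll

theorem dp_recursion_general {n : ℕ} (r d : Fin n → ℝ) (L : ℝ)
    (hrd : ∀ j, r j ≤ d j) (hmono : ∀ j k : Fin n, j ≤ k → r j ≤ r k)
    (𝒥 : Set (Fin n)) (lam : Fin n → ℝ) (j k : Fin n)
    (hjk : j < k) (hk : k ∈ 𝒥) (hdL : d k - r j ≤ L)
    (hT : (Finset.univ.filter (fun ℓ : Fin n =>
      j ≤ ℓ ∧ ℓ < k ∧ (Fcoll r d L 𝒥 j ℓ).Nonempty ∧ d ℓ ≤ r k)).Nonempty) :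
    (Fcoll r d L 𝒥 j k).Nonempty ∧
    fval r d L 𝒥 lam j k =
      lam k + (Finset.univ.filter (fun ℓ : Fin n =>
        j ≤ ℓ ∧ ℓ < k ∧ (Fcoll r d L 𝒥 j ℓ).Nonempty ∧ d ℓ ≤ r k)).sup' hT
        (fun ℓ => fval r d L 𝒥 lam j ℓ) := by
  obtain ⟨ℓ₀, hℓ₀⟩ := id hT
  obtain ⟨-, hℓ₀k, ⟨s₀, hs₀⟩, hdℓ₀⟩ := (mem_filter.1 hℓ₀).2
  have hF : (Fcoll r d L 𝒥 j k).Nonempty :=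
    ⟨_, insert_mem_Fcoll hrd hmono hk hℓ₀k hdℓ₀ hdL hs₀⟩
  refine ⟨hF, le_antisymm (fval_le hF fun s hs => ?_) ?_⟩
  · obtain ⟨ℓ, hjℓ, hℓk, hdℓ, hse⟩ := exists_erase_mem_Fcoll hjk hs
    calc ∑ m ∈ s, lam m = lam k + ∑ m ∈ s.erase k, lam m :=
          (add_sum_erase s lam (mem_Fcoll.1 hs).2.2.2.1).symm
      _ ≤ lam k + fval r d L 𝒥 lam j ℓ := by gcongr; exact sum_le_fval hse
      _ ≤ _ := by
          gcongr
          exact le_sup' (fun ℓ => fval r d L 𝒥 lam j ℓ)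
            (mem_filter.2 ⟨mem_univ ℓ, hjℓ, hℓk, ⟨_, hse⟩, hdℓ⟩)
  · rw [add_sup']
    refine sup'_le _ _ fun ℓ hℓ => ?_
    obtain ⟨-, hℓk, hne, hdℓ⟩ := (mem_filter.1 hℓ).2
    exact add_fval_le_fval hrd hmono hk hℓk hdℓ hdL hne

theorem dp_recursion {n : ℕ} (r d : Fin n → ℝ) (L : ℝ)
    (hrd : ∀ j, r j ≤ d j) (hmono : ∀ j k : Fin n, j ≤ k → r j ≤ r k)
    (hL : 0 < L)
    (𝒥 : Set (Fin n)) (lam : Fin n → ℝ) (j k : Fin n)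
    (hjk : j < k) (hj : j ∈ 𝒥) (hk : k ∈ 𝒥) (hdL : d k - r j ≤ L)
    (hT : (Finset.univ.filter (fun ℓ : Fin n =>
      j ≤ ℓ ∧ ℓ < k ∧ (Fcoll r d L 𝒥 j ℓ).Nonempty ∧ d ℓ ≤ r k)).Nonempty) :
    (Fcoll r d L 𝒥 j k).Nonempty ∧
    fval r d L 𝒥 lam j k =
      lam k + (Finset.univ.filter (fun ℓ : Fin n =>
        j ≤ ℓ ∧ ℓ < k ∧ (Fcoll r d L 𝒥 j ℓ).Nonempty ∧ d ℓ ≤ r k)).sup' hT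
        (fun ℓ => fval r d L 𝒥 lam j ℓ) :=
  dp_recursion_general r d L hrd hmono 𝒥 lam j k hjk hk hdL hT
end
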